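/- In the free moment-cumulant setting, the mixed derivative of the n-th moment satisfies: for k₁,…,k_l ≥ 1 with k_l arbitrary, (∂^l M_n/∂R_{k₁}⋯∂R_{k_l}) evaluated at R₁=R₂=⋯=0 equals (n)_{l−1} if n = k₁+⋯+k_l, and 0 otherwise, where (n)_{l−1} is a falling factorial. Equivalently, the coefficient of R_{k₁}⋯R_{k_l} (as a monomial, counted with multiplicity of orderings) in M_n depends only on l and on k₁+⋯+k_l. -/

import Mathlib

/-!
Substitute `R_j ↦ ∑_{k_i = j} ε_i` in fresh variables `ε_1, …, ε_l`. By the chain rule,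
`∂/∂ε_i` of the substituted polynomial is the substitution of `∂/∂R_{k_i}`, so the mixed
derivative at `0` becomes the coefficient of the squarefree monomial `ε_1 ⋯ ε_l` in the
substituted `M_n`; repeated indices among the `k_i` no longer matter.

The substituted moment series satisfies `B = 1 + ∑_i ε_i (w B)^{k_i}`, hence
`B^{p+1} = B^p + ∑_i ε_i w^{k_i} B^{k_i + p}`. By induction on `T` and `p`, the coefficient of
`ε_T w^m` in `B^p` vanishes unless `m = W := ∑_{i ∈ T} k_i`, where it is `p (W + p - 1)_{|T| - 1}`
(Lagrange inversion's `p/(W+p) · (W+p)_{|T|}`). Taking `T` = everything and `p = 1` gives `(n)_{l-1}`.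
-/

open Finset PowerSeries

/-- Ground ring: polynomials in the free cumulants `R₁, R₂, …` (variable `n` is `Rₙ`). -/
abbrev RRing : Type := MvPolynomial ℕ ℚ

namespace MvPolynomial

variable {R σ τ : Type*} [CommSemiring R]

theorem constantCoeff_foldl_pderiv [DecidableEq σ] {L : List σ} (hL : L.Nodup)
    (p : MvPolynomial σ R) :
    constantCoeff (L.foldl (fun q j => pderiv j q) p) = coeff (Multiset.toFinsupp L) p := by
  induction L generalizing p with
  | nil => simp [constantCoeff]
  | cons i L ih =>
    obtain ⟨hi, hL⟩ := List.nodup_cons.mp hL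
    have hcount : Multiset.toFinsupp (L : Multiset σ) i = 0 := by simp [hi]
    rw [List.foldl_cons, ih hL, coeff_pderiv, hcount, Nat.cast_zero, zero_add, mul_one,
      ← Multiset.cons_coe, ← Multiset.singleton_add, Multiset.toFinsupp_add,
      Multiset.toFinsupp_singleton, add_comm]

theorem coeff_toFinsupp_X_mul [DecidableEq σ] (T : Finset σ) (i : σ) (q : MvPolynomial σ R) :
    coeff (Multiset.toFinsupp T.val) (X i * q)
      = if i ∈ T then coeff (Multiset.toFinsupp (T.erase i).val) q else 0 := by
  rw [coeff_X_mul', Multiset.toFinsupp_support, Finset.val_toFinset]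
  split_ifs with hi
  · rw [← Multiset.cons_erase (mem_def.1 hi), ← Multiset.singleton_add, Multiset.toFinsupp_add,
      Multiset.toFinsupp_singleton, add_tsub_cancel_left, erase_val]
  · rfl

variable [Fintype τ] [DecidableEq σ]

noncomputable def fiberSum (f : τ → σ) : MvPolynomial σ R →ₐ[R] MvPolynomial τ R :=
  aeval fun j => ∑ i with f i = j, X i

theorem fiberSum_X (f : τ → σ) (j : σ) :
    fiberSum f (X j : MvPolynomial σ R) = ∑ i with f i = j, X i :=
  aeval_X _ _

theorem pderiv_fiberSum [DecidableEq τ] (f : τ → σ) (i : τ) (p : MvPolynomial σ R) :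
    pderiv i (fiberSum f p) = fiberSum f (pderiv (f i) p) := by
  induction p using MvPolynomial.induction_on with
  | C a => simp
  | add p q hp hq => simp only [map_add, hp, hq]
  | mul_X p j hp =>
    by_cases h : f i = j
    · subst h
      simp [hp, fiberSum_X, pderiv_X]
    · simp [hp, fiberSum_X, pderiv_X, Pi.single_apply, h, Ne.symm h]

theorem constantCoeff_fiberSum (f : τ → σ) (p : MvPolynomial σ R) :
    constantCoeff (fiberSum f p) = constantCoeff p := by
  induction p using MvPolynomial.induction_on with
  | C a => simp
  | add p q hp hq => simp only [map_add, hp, hq]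
  | mul_X p j hp => simp [hp, fiberSum_X]

theorem constantCoeff_foldl_pderiv_fiberSum [DecidableEq τ] (f : τ → σ) {L : List τ}
    (hL : L.Nodup) (p : MvPolynomial σ R) :
    constantCoeff ((L.map f).foldl (fun q j => pderiv j q) p)
      = coeff (Multiset.toFinsupp L) (fiberSum f p) := by
  have hcomm : ∀ q : MvPolynomial σ R, fiberSum f (L.foldl (fun q i => pderiv (f i) q) q)
      = L.foldl (fun q i => pderiv i q) (fiberSum f q) := by
    induction L with
    | nil => simp
    | cons i L ih => simp [pderiv_fiberSum, ih (List.nodup_cons.mp hL).2]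
  rw [← constantCoeff_fiberSum f, List.foldl_map, hcomm, constantCoeff_foldl_pderiv hL]

end MvPolynomial

namespace PowerSeries

variable {R S : Type*} [CommSemiring R] [CommSemiring S]

/-- `B = 1 + ∑_{n ≥ 1} a n (X B)ⁿ`, coefficientwise (only `n ≤ m` contributes to `Xᵐ`). -/
def IsMomentSeries (a : ℕ → R) (B : R⟦X⟧) : Prop :=
  ∀ m, coeff m B = (if m = 0 then 1 else 0) + ∑ n ∈ Icc 1 m, a n * coeff m ((X * B) ^ n)

theorem IsMomentSeries.map {a : ℕ → R} {B : R⟦X⟧} (hB : IsMomentSeries a B) (φ : R →+* S) :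
    IsMomentSeries (φ ∘ a) (map φ B) := by
  intro m
  rw [coeff_map, hB m]
  simp [apply_ite φ, ← coeff_map, map_X]

theorem coeff_X_mul_pow_of_lt (B : R⟦X⟧) {m n : ℕ} (h : m < n) : coeff m ((X * B) ^ n) = 0 := by
  rw [mul_pow, coeff_X_pow_mul', if_neg (by omega)]

variable {ι : Type*} [Fintype ι] {k : ι → ℕ} {c : ι → R} {B : R⟦X⟧}

theorem IsMomentSeries.eq_one_add_sum {a : ℕ → R} (hk : ∀ i, 1 ≤ k i)
    (ha : ∀ n, a n = ∑ i with k i = n, c i) (hB : IsMomentSeries a B) :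
    B = 1 + ∑ i, C (c i) * (X * B) ^ k i := by
  ext m
  have hfib : ∑ n ∈ Icc 1 m, a n * coeff m ((X * B) ^ n) = ∑ i, c i * coeff m ((X * B) ^ k i) :=
    calc _ = ∑ n ∈ Icc 1 m, ∑ i with k i = n, c i * coeff m ((X * B) ^ k i) := by
          simp only [ha, sum_mul]
          exact sum_congr rfl fun n _ => sum_congr rfl fun i hi => by rw [(mem_filter.1 hi).2]
      _ = ∑ i with k i ∈ Icc 1 m, c i * coeff m ((X * B) ^ k i) :=
          sum_fiberwise_eq_sum_filter _ _ _ _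
      _ = _ := sum_filter_of_ne fun i _ hi => mem_Icc.2 ⟨hk i, not_lt.1 fun hlt => hi <| by
          rw [coeff_X_mul_pow_of_lt B hlt, mul_zero]⟩
  rw [hB m, hfib, map_add, coeff_one, map_sum]
  simp only [coeff_C_mul]

theorem pow_succ_eq_of_eq_one_add_sum (hB : B = 1 + ∑ i, C (c i) * (X * B) ^ k i) (p : ℕ) :
    B ^ (p + 1) = B ^ p + ∑ i, C (c i) * (X ^ k i * B ^ (k i + p)) := by
  rw [pow_succ, congrArg (B ^ p * ·) hB, mul_add, mul_one, mul_sum]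
  congr 1
  exact sum_congr rfl fun i _ => by rw [mul_pow, pow_add]; ring

end PowerSeries

theorem Nat.succ_mul_descFactorial_succ_eq (W p s : ℕ) :
    (p + 1) * (W + p).descFactorial (s + 1)
      = p * (W + p - 1).descFactorial (s + 1)
        + (W + (s + 2) * p) * (W + p - 1).descFactorial s := by
  rcases Nat.eq_zero_or_pos (W + p) with h | h
  · obtain ⟨rfl, rfl⟩ : W = 0 ∧ p = 0 := by omega
    simp
  obtain ⟨n, hn⟩ : ∃ n, W + p = n + 1 := ⟨W + p - 1, by omega⟩
  rw [hn, Nat.succ_descFactorial_succ, Nat.add_sub_cancel, Nat.descFactorial_succ]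
  rcases le_or_gt s n with hs | hs
  · obtain ⟨r, rfl⟩ := Nat.exists_eq_add_of_le hs
    rw [Nat.add_sub_cancel_left, show W + (s + 2) * p = s + r + 1 + (s + 1) * p by linarith]
    ring
  · simp [Nat.descFactorial_eq_zero_iff_lt.2 hs]

def multilinearCoeff (s W p : ℕ) : ℕ :=
  if s = 0 then 1 else p * (W + p - 1).descFactorial (s - 1)

theorem multilinearCoeff_succ {ι : Type*} [DecidableEq ι] (k : ι → ℕ) (T : Finset ι) (p : ℕ) :
    multilinearCoeff #T (∑ i ∈ T, k i) (p + 1)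
      = multilinearCoeff #T (∑ i ∈ T, k i) p
        + ∑ i ∈ T, multilinearCoeff (#T - 1) (∑ j ∈ T.erase i, k j) (k i + p) := by
  obtain hT | hT | ⟨s, hs⟩ : #T = 0 ∨ #T = 1 ∨ ∃ s, #T = s + 2 := by
    rcases #T with _ | _ | s <;> simp
  · simp [card_eq_zero.1 hT, multilinearCoeff]
  · obtain ⟨a, rfl⟩ := card_eq_one.1 hT
    simp [multilinearCoeff]
  have hterm : ∀ i ∈ T, multilinearCoeff (#T - 1) (∑ j ∈ T.erase i, k j) (k i + p)
      = (k i + p) * (∑ j ∈ T, k j + p - 1).descFactorial s := by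
    intro i hi
    rw [multilinearCoeff, if_neg (by omega), ← add_sum_erase T k hi, hs]
    congr 2
    omega
  rw [sum_congr rfl hterm, ← sum_mul, sum_add_distrib, sum_const, smul_eq_mul, hs,
    multilinearCoeff, multilinearCoeff, if_neg (by omega), if_neg (by omega),
    show s + 2 - 1 = s + 1 by omega]
  generalize ∑ i ∈ T, k i = W
  rw [show W + (p + 1) - 1 = W + p by omega, Nat.succ_mul_descFactorial_succ_eq]

section MultilinearCoeff

variable {R ι : Type*} [CommSemiring R] [Fintype ι] [DecidableEq ι] {k : ι → ℕ}
  {B : (MvPolynomial ι R)⟦X⟧}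

theorem coeff_toFinsupp_coeff_pow_succ (hB : B = 1 + ∑ i, C (MvPolynomial.X i) * (X * B) ^ k i)
    (T : Finset ι) (p m : ℕ) :
    (coeff m (B ^ (p + 1))).coeff (Multiset.toFinsupp T.val)
      = (coeff m (B ^ p)).coeff (Multiset.toFinsupp T.val)
        + ∑ i ∈ T, if k i ≤ m
            then (coeff (m - k i) (B ^ (k i + p))).coeff (Multiset.toFinsupp (T.erase i).val)
            else 0 := by
  rw [pow_succ_eq_of_eq_one_add_sum hB, map_add, map_sum, MvPolynomial.coeff_add,
    MvPolynomial.coeff_sum]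
  simp only [coeff_C_mul, coeff_X_pow_mul', MvPolynomial.coeff_toFinsupp_X_mul, sum_ite_mem,
    univ_inter, apply_ite (MvPolynomial.coeff _), MvPolynomial.coeff_zero]

theorem coeff_toFinsupp_coeff_pow (hB : B = 1 + ∑ i, C (MvPolynomial.X i) * (X * B) ^ k i)
    (T : Finset ι) (p m : ℕ) :
    (coeff m (B ^ p)).coeff (Multiset.toFinsupp T.val)
      = if m = ∑ i ∈ T, k i then (multilinearCoeff #T (∑ i ∈ T, k i) p : R) else 0 := by
  induction T using Finset.strongInduction generalizing p m with
  | H T ih =>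
  induction p generalizing m with
  | zero =>
    rw [pow_zero, coeff_one, apply_ite (MvPolynomial.coeff _), MvPolynomial.coeff_one,
      MvPolynomial.coeff_zero]
    rcases T.eq_empty_or_nonempty with rfl | hT
    · simp [multilinearCoeff]
    · simp [multilinearCoeff, hT.ne_empty, eq_comm (a := (0 : ι →₀ ℕ))]
  | succ p ihp =>
    have hterm : ∀ i ∈ T,
        (if k i ≤ m
          then (coeff (m - k i) (B ^ (k i + p))).coeff (Multiset.toFinsupp (T.erase i).val)
          else 0)
        = if m = ∑ i ∈ T, k i
          then (multilinearCoeff (#T - 1) (∑ j ∈ T.erase i, k j) (k i + p) : R) else 0 := by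
      intro i hi
      have hW := add_sum_erase T k hi
      rw [ih _ (erase_ssubset hi), card_erase_of_mem hi]
      split_ifs <;> first | rfl | omega
    rw [coeff_toFinsupp_coeff_pow_succ hB, ihp, sum_congr rfl hterm]
    split_ifs
    · rw [multilinearCoeff_succ]
      push_cast
      rfl
    · simp

end MultilinearCoeff

theorem mixed_derivative_of_moment_general (A : PowerSeries RRing)
    (hA : ∀ m : ℕ, coeff (R := RRing) m A =
      (if m = 0 then 1 else 0) +
        ∑ n ∈ Finset.Icc 1 m, MvPolynomial.X n * coeff (R := RRing) m ((X * A) ^ n))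
    (n l : ℕ) (kk : Fin l → ℕ) (hkk : ∀ i, 1 ≤ kk i) :
    MvPolynomial.eval (fun _ => (0 : ℚ))
        ((List.ofFn kk).foldl (fun p j => MvPolynomial.pderiv j p) (coeff (R := RRing) n A))
      = if (∑ i, kk i) = n then (n.descFactorial (l - 1) : ℚ) else 0 := by
  let φ : RRing →+* MvPolynomial (Fin l) ℚ := MvPolynomial.fiberSum (R := ℚ) kk
  have hB : map φ A = 1 + ∑ i, C (MvPolynomial.X i) * (X * map φ A) ^ kk i :=
    (IsMomentSeries.map (a := MvPolynomial.X) hA φ).eq_one_add_sum hkk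
      fun j => MvPolynomial.fiberSum_X kk j
  rw [MvPolynomial.eval_zero', List.ofFn_eq_map,
    MvPolynomial.constantCoeff_foldl_pderiv_fiberSum kk (List.nodup_finRange l),
    ← Finset.val_univ_fin, ← AlgHom.coe_toRingHom, ← coeff_map, ← pow_one (map _ A),
    coeff_toFinsupp_coeff_pow hB univ]
  by_cases h : ∑ i, kk i = n
  · subst h
    rcases Nat.eq_zero_or_pos l with rfl | hl
    · simp [multilinearCoeff]
    · simp [multilinearCoeff, hl.ne']
  · simp [h, Ne.symm h]

/-- Let `A(w) = ∑ M_n wⁿ` be the formal power series whose coefficient `M_n` is the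
universal polynomial in `R₁, R₂, …` given by the free moment-cumulant relation
`A = 1 + ∑_{n≥1} Rₙ (w·A)ⁿ` (equivalently, `M_n = ∑_{Π ∈ NC(n)} ∏_{b∈Π} R_{|b|}`).
Then for `k₁, …, k_l ≥ 1`, the mixed derivative `∂^l M_n / ∂R_{k₁} ⋯ ∂R_{k_l}` evaluated
at `R₁ = R₂ = ⋯ = 0` equals the falling factorial `(n)_{l−1}` if `n = k₁ + ⋯ + k_l`,
and `0` otherwise. -/
theorem mixed_derivative_of_moment (A : PowerSeries RRing)
    (hA : ∀ m : ℕ, coeff (R := RRing) m A =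
      (if m = 0 then 1 else 0) +
        ∑ n ∈ Finset.Icc 1 m, MvPolynomial.X n * coeff (R := RRing) m ((X * A) ^ n))
    (n l : ℕ) (hl : 1 ≤ l) (kk : Fin l → ℕ) (hkk : ∀ i, 1 ≤ kk i) :
    MvPolynomial.eval (fun _ => (0 : ℚ))
        ((List.ofFn kk).foldl (fun p j => MvPolynomial.pderiv j p) (coeff (R := RRing) n A))
      = if (∑ i, kk i) = n then (n.descFactorial (l - 1) : ℚ) else 0 :=
  mixed_derivative_of_moment_general A hA n l kk hkk
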